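/- Symmetric Green's functions on finite quotients have the inversion symmetry G(x,y) = G(p^{m−1} x^{−1}, p^{m−1} y^{−1}): if k ≥ 1 and G is a symmetric Green's function on E_k, then for all x, y ∈ E one has p^{m−1} x^{−1} ∈ E, p^{m−1} y^{−1} ∈ E, and G(p^{m−1} x^{−1}, p^{m−1} y^{−1}) = G(x, y). -/

import Mathlib

open MeasureTheory

noncomputable section

/-- The fundamental domain `E = ⋃_{s=0}^{m-1} p^s ℤ_p^×` of the Tate curve
`ℚ_p^×/p^{mℤ}`, described as the set of `x` with `p^{-(m-1)} ≤ |x| ≤ 1`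
(such an `x` is automatically nonzero). -/
def Efund (p m : ℕ) [Fact p.Prime] : Set ℚ_[p] :=
  {x | (p : ℝ) ^ (1 - (m : ℤ)) ≤ ‖x‖ ∧ ‖x‖ ≤ 1}

/-- The operator `(Dφ)(x) = |x| ∫_E (φ(z) − φ(x))/|z − x|² dμ⁺(z)`. -/
def Dop (p m : ℕ) [Fact p.Prime] [MeasurableSpace ℚ_[p]]
    (μ : Measure ℚ_[p]) (φ : ℚ_[p] → ℝ) (x : ℚ_[p]) : ℝ :=
  ‖x‖ * ∫ z in Efund p m, (φ z - φ x) / ‖z - x‖ ^ 2 ∂μ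

/-- The multiplicative measure `dμ× = dμ⁺/|x|`. -/
def mulMeasure (p : ℕ) [Fact p.Prime] [MeasurableSpace ℚ_[p]]
    (μ : Measure ℚ_[p]) : Measure ℚ_[p] :=
  μ.withDensity fun x => ENNReal.ofReal (1 / ‖x‖)

/-- `f` is locally constant on `E`: every point of `E` has a neighborhood in `E`
on which `f` is constant. -/
def LocConstOn (p m : ℕ) [Fact p.Prime] (f : ℚ_[p] → ℝ) : Prop :=
  ∀ x ∈ Efund p m, ∃ n : ℕ,
    ∀ y ∈ Efund p m, ‖y - x‖ ≤ (p : ℝ) ^ (-(n : ℤ)) → f y = f x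

/-- `f : E → ℝ` has conductor `k`: `f(xu) = f(x)` for all `x ∈ E` and all
`u ∈ 1 + p^k ℤ_p` (note `xu ∈ E`). -/
def HasConductor (p m : ℕ) [Fact p.Prime] (k : ℕ) (f : ℚ_[p] → ℝ) : Prop :=
  ∀ x ∈ Efund p m, ∀ u : ℚ_[p], ‖u - 1‖ ≤ (p : ℝ) ^ (-(k : ℤ)) → f (x * u) = f x

/-- A Green's function on the finite quotient `E_k`: a function `G : E × E → ℝ` of
conductor `k` in each variable such that for all `x, y ∈ E`,
`(D G(·,y))(x) = p^k · 𝟙[x/y ∈ 1 + p^k ℤ_p] − 1/V` where `V = m (1 − 1/p)`. -/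
def IsGreen (p m : ℕ) [Fact p.Prime] [MeasurableSpace ℚ_[p]]
    (μ : Measure ℚ_[p]) (k : ℕ) (G : ℚ_[p] → ℚ_[p] → ℝ) : Prop :=
  (∀ y ∈ Efund p m, HasConductor p m k (fun x => G x y)) ∧
  (∀ x ∈ Efund p m, HasConductor p m k (fun y => G x y)) ∧
  ∀ x ∈ Efund p m, ∀ y ∈ Efund p m,
    Dop p m μ (fun z => G z y) x =
      (if ‖x / y - 1‖ ≤ (p : ℝ) ^ (-(k : ℤ)) then (p : ℝ) ^ k else 0)
        - 1 / ((m : ℝ) * (1 - 1 / (p : ℝ)))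

/-- `G` is symmetric on `E × E`. -/
def IsSymmG (p m : ℕ) [Fact p.Prime] (G : ℚ_[p] → ℚ_[p] → ℝ) : Prop :=
  ∀ x ∈ Efund p m, ∀ y ∈ Efund p m, G x y = G y x

/-!
The inversion `σ x = p^{m-1} x⁻¹` is an involution of `E` that maps each cell `c (1 + p^k ℤ_p)`
onto the cell of `σ c`. Every cell has Haar measure proportional to the norm of its points, so
the weight `|x| |c| / |c - x|²` with which the cell of `c` enters `D` at `x` is `σ`-invariant,
and `D (φ ∘ σ) = (D φ) ∘ σ` for functions of conductor `k`. Since `σ x / σ y = (x / y)⁻¹`, the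
right-hand side of the Green equation is `σ`-invariant too, so for fixed `y` the function
`z ↦ G (σ z) (σ y) - G z y` is annihilated by `D`; by the maximum principle on the compact set
`E` it is constant. With the symmetry of `G` this makes `Δ (a, b) = G (σ a) (σ b) - G a b`
constant on `E × E`, and `Δ (σ x, σ y) = -Δ (x, y)` forces `Δ = 0`.
-/

open Metric Filter Topology

variable {p : ℕ} [hp : Fact p.Prime] {m K : ℕ}

lemma one_lt_natCast_prime : (1 : ℝ) < p := Nat.one_lt_cast.mpr hp.out.one_lt

lemma natCast_prime_pos : (0 : ℝ) < p := zero_lt_one.trans one_lt_natCast_prime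

lemma natCast_prime_ne_zero : (p : ℚ_[p]) ≠ 0 := Nat.cast_ne_zero.mpr hp.out.ne_zero

lemma zpow_neg_lt_one (hK : 1 ≤ K) : (p : ℝ) ^ (-(K : ℤ)) < 1 :=
  zpow_lt_one_of_neg₀ one_lt_natCast_prime (by omega)

lemma Padic.norm_eq_one_of_norm_sub_one_lt {u : ℚ_[p]} (h : ‖u - 1‖ < 1) : ‖u‖ = 1 := by
  simpa using Padic.norm_eq_of_norm_sub_lt_right (z2 := (1 : ℚ_[p])) (by simpa using h)

lemma Padic.norm_inv_sub_one_le_iff {u : ℚ_[p]} {r : ℝ} (hr : r < 1) :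
    ‖u⁻¹ - 1‖ ≤ r ↔ ‖u - 1‖ ≤ r := by
  suffices h : ∀ v : ℚ_[p], ‖v - 1‖ ≤ r → ‖v⁻¹ - 1‖ ≤ r from
    ⟨fun hu => inv_inv u ▸ h _ hu, h u⟩
  intro v hv
  have hv1 : ‖v‖ = 1 := Padic.norm_eq_one_of_norm_sub_one_lt (hv.trans_lt hr)
  have hv0 : v ≠ 0 := norm_ne_zero_iff.mp (by simp [hv1])
  rwa [show v⁻¹ - 1 = -(v - 1) / v by field_simp; ring, norm_div, norm_neg, hv1, div_one]

lemma ne_zero_of_mem_Efund {x : ℚ_[p]} (hx : x ∈ Efund p m) : x ≠ 0 := by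
  rintro rfl
  exact (zpow_pos natCast_prime_pos _).not_ge (by simpa using hx.1)

lemma one_le_of_mem_Efund {x : ℚ_[p]} (hx : x ∈ Efund p m) : 1 ≤ m := by
  by_contra! hm
  have h := hx.1.trans hx.2
  simp only [Nat.lt_one_iff.mp hm, CharP.cast_eq_zero, sub_zero, zpow_one] at h
  exact one_lt_natCast_prime.not_ge h

lemma isCompact_Efund : IsCompact (Efund p m) :=
  isCompact_of_isClosed_isBounded
    ((isClosed_le continuous_const continuous_norm).inter
      (isClosed_le continuous_norm continuous_const))
    (isBounded_closedBall.subset fun _ hx => mem_closedBall_zero_iff.mpr hx.2)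

variable (p m) in
def inversion (x : ℚ_[p]) : ℚ_[p] := (p : ℚ_[p]) ^ (m - 1) * x⁻¹

lemma inversion_involutive : Function.Involutive (inversion p m) := fun x => by
  have : (p : ℚ_[p]) ^ (m - 1) ≠ 0 := pow_ne_zero _ natCast_prime_ne_zero
  rw [inversion, inversion, mul_inv, inv_inv, mul_inv_cancel_left₀ this]

lemma inversion_ne_zero {x : ℚ_[p]} (hx : x ≠ 0) : inversion p m x ≠ 0 :=
  mul_ne_zero (pow_ne_zero _ natCast_prime_ne_zero) (inv_ne_zero hx)

lemma inversion_div_inversion (x y : ℚ_[p]) :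
    inversion p m x / inversion p m y = (x / y)⁻¹ := by
  have : (p : ℚ_[p]) ^ (m - 1) ≠ 0 := pow_ne_zero _ natCast_prime_ne_zero
  simp only [inversion, inv_div]
  field_simp

lemma norm_inversion (hm : 1 ≤ m) (x : ℚ_[p]) :
    ‖inversion p m x‖ = (p : ℝ) ^ (1 - (m : ℤ)) / ‖x‖ := by
  rw [inversion, norm_mul, norm_inv, Padic.norm_p_pow, div_eq_mul_inv]
  congr 2
  omega

lemma norm_inversion_sub_inversion (hm : 1 ≤ m) {a b : ℚ_[p]} (ha : a ≠ 0) (hb : b ≠ 0) :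
    ‖inversion p m a - inversion p m b‖ = (p : ℝ) ^ (1 - (m : ℤ)) * ‖a - b‖ / (‖a‖ * ‖b‖) := by
  have : inversion p m a - inversion p m b = inversion p m 1 * (b - a) / (a * b) := by
    simp only [inversion]
    field_simp
  rw [this, norm_div, norm_mul, norm_mul, norm_inversion hm, norm_one, div_one, norm_sub_rev]

/-- Since every cell has Haar measure proportional to the norm of its points,
`‖a‖ ‖b‖ / ‖a - b‖²` is the weight with which the cell of `a` enters `D` at `b`; its invariance
makes `D` commute with the inversion. -/
lemma inversion_kernel_eq (hm : 1 ≤ m) {a b : ℚ_[p]} (ha : a ≠ 0) (hb : b ≠ 0) :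
    ‖inversion p m a‖ * ‖inversion p m b‖ / ‖inversion p m a - inversion p m b‖ ^ 2 =
      ‖a‖ * ‖b‖ / ‖a - b‖ ^ 2 := by
  rw [norm_inversion_sub_inversion hm ha hb, norm_inversion hm, norm_inversion hm]
  rcases eq_or_ne a b with rfl | hab
  · simp
  have hP : (p : ℝ) ^ (1 - (m : ℤ)) ≠ 0 := (zpow_pos natCast_prime_pos _).ne'
  have ha' := norm_ne_zero_iff.mpr ha
  have hb' := norm_ne_zero_iff.mpr hb
  have hab' := norm_ne_zero_iff.mpr (sub_ne_zero.mpr hab)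
  field_simp

lemma inversion_mem_Efund {x : ℚ_[p]} (hx : x ∈ Efund p m) : inversion p m x ∈ Efund p m := by
  have hm := one_le_of_mem_Efund hx
  have hx0 := norm_pos_iff.mpr (ne_zero_of_mem_Efund hx)
  have hP : (0 : ℝ) < (p : ℝ) ^ (1 - (m : ℤ)) := zpow_pos natCast_prime_pos _
  constructor
  · rw [norm_inversion hm, le_div_iff₀ hx0]
    nlinarith [hx.2]
  · rw [norm_inversion hm, div_le_one hx0]
    exact hx.1

variable (p K) in
/-- The coset `c (1 + p^K ℤ_p)`, written as a ball (for `c ≠ 0`). -/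
def cell (c : ℚ_[p]) : Set ℚ_[p] := closedBall c ((p : ℝ) ^ (-(K : ℤ)) * ‖c‖)

lemma mem_cell_iff {c z : ℚ_[p]} (hc : c ≠ 0) :
    z ∈ cell p K c ↔ ‖z / c - 1‖ ≤ (p : ℝ) ^ (-(K : ℤ)) := by
  rw [cell, mem_closedBall, dist_eq_norm, ← div_le_iff₀ (norm_pos_iff.mpr hc), ← norm_div,
    sub_div, div_self hc]

lemma norm_eq_of_mem_cell (hK : 1 ≤ K) {c z : ℚ_[p]} (hz : z ∈ cell p K c) : ‖z‖ = ‖c‖ := by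
  rcases eq_or_ne c 0 with rfl | hc
  · simpa [cell] using hz
  rw [cell, mem_closedBall, dist_eq_norm] at hz
  exact Padic.norm_eq_of_norm_sub_lt_right
    (hz.trans_lt (mul_lt_of_lt_one_left (norm_pos_iff.mpr hc) (zpow_neg_lt_one hK)))

lemma cell_eq_of_mem (hK : 1 ≤ K) {c z : ℚ_[p]} (hz : z ∈ cell p K c) :
    cell p K z = cell p K c := by
  rw [cell, norm_eq_of_mem_cell hK hz]
  exact (IsUltrametricDist.closedBall_eq_of_mem hz).symm

lemma cell_mem_nhds {c : ℚ_[p]} (hc : c ≠ 0) : cell p K c ∈ 𝓝 c :=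
  closedBall_mem_nhds c
    (mul_pos (zpow_pos natCast_prime_pos _) (norm_pos_iff.mpr hc))

lemma cell_subset_Efund (hK : 1 ≤ K) {c : ℚ_[p]} (hc : c ∈ Efund p m) :
    cell p K c ⊆ Efund p m := fun z hz => by
  simpa only [Efund, Set.mem_ofPred_eq, norm_eq_of_mem_cell hK hz] using hc

lemma inversion_mem_cell_iff (hK : 1 ≤ K) {c w : ℚ_[p]} (hc : c ≠ 0) :
    inversion p m w ∈ cell p K c ↔ w ∈ cell p K (inversion p m c) := by
  rw [mem_cell_iff hc, mem_cell_iff (inversion_ne_zero hc)]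
  conv_lhs => rw [← inversion_involutive (m := m) c, inversion_div_inversion]
  exact Padic.norm_inv_sub_one_le_iff (zpow_neg_lt_one hK)

lemma image_inversion_cell (hK : 1 ≤ K) {c : ℚ_[p]} (hc : c ≠ 0) :
    inversion p m '' cell p K c = cell p K (inversion p m c) := by
  ext w
  rw [inversion_involutive.image_eq_preimage_symm, Set.mem_preimage]
  exact inversion_mem_cell_iff hK hc

variable (p m) in
lemma finite_cells (hK : 1 ≤ K) : (cell p K '' Efund p m).Finite := by
  obtain ⟨t, -, hcover⟩ := isCompact_Efund.elim_nhds_subcover (cell p K)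
    fun x hx => cell_mem_nhds (ne_zero_of_mem_Efund hx)
  refine (t.finite_toSet.image (cell p K)).subset ?_
  rintro _ ⟨c, hc, rfl⟩
  obtain ⟨x, hxt, hcx⟩ := Set.mem_iUnion₂.mp (hcover hc)
  exact ⟨x, hxt, (cell_eq_of_mem hK hcx).symm⟩

lemma sUnion_cells (hK : 1 ≤ K) : ⋃₀ (cell p K '' Efund p m) = Efund p m :=
  Set.Subset.antisymm (Set.sUnion_subset (by rintro _ ⟨c, hc, rfl⟩; exact cell_subset_Efund hK hc))
    fun x hx => ⟨cell p K x, Set.mem_image_of_mem _ hx, mem_closedBall_self (by positivity)⟩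

lemma pairwiseDisjoint_cells (hK : 1 ≤ K) : (cell p K '' Efund p m).PairwiseDisjoint id := by
  rintro _ ⟨c, -, rfl⟩ _ ⟨c', -, rfl⟩ hne
  exact Set.disjoint_left.mpr fun z hz hz' =>
    hne ((cell_eq_of_mem hK hz).symm.trans (cell_eq_of_mem hK hz'))

lemma Efund_eq_biUnion_cells (hK : 1 ≤ K) :
    Efund p m = ⋃ B ∈ (finite_cells p m hK).toFinset, B := by
  rw [← Finset.set_biUnion_coe, Set.Finite.coe_toFinset, ← Set.sUnion_eq_biUnion, sUnion_cells hK]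

lemma closedBall_zero_zpow_succ_eq_biUnion (n : ℤ) :
    closedBall (0 : ℚ_[p]) ((p : ℝ) ^ (n + 1)) =
      ⋃ j ∈ Finset.range p, closedBall ((j : ℚ_[p]) * (p : ℚ_[p]) ^ (-(n + 1))) ((p : ℝ) ^ n) := by
  set w := (p : ℚ_[p]) ^ (-(n + 1))
  have hw : ‖w‖ = (p : ℝ) ^ (n + 1) := by rw [Padic.norm_p_zpow, neg_neg]
  have hw0 : w ≠ 0 := zpow_ne_zero _ natCast_prime_ne_zero
  have hpos : (0 : ℝ) < (p : ℝ) ^ (n + 1) := zpow_pos natCast_prime_pos _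
  ext x
  simp only [mem_closedBall, dist_eq_norm, sub_zero, Set.mem_iUnion,
    Finset.mem_range, exists_prop]
  constructor
  · intro hx
    have hu : ‖x / w‖ ≤ 1 := by rwa [norm_div, hw, div_le_one hpos]
    obtain ⟨j, hj, hju⟩ := PadicInt.exists_mem_range (⟨x / w, hu⟩ : ℤ_[p])
    have hdigit : ‖x / w - j‖ ≤ (p : ℝ) ^ (-1 : ℤ) := by
      rw [Padic.norm_le_pow_iff_norm_lt_pow_add_one, neg_add_cancel, zpow_zero]
      exact PadicInt.mem_nonunits.mp hju
    refine ⟨j, hj, ?_⟩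
    calc ‖x - j * w‖ = ‖x / w - j‖ * (p : ℝ) ^ (n + 1) := by
          rw [← hw, ← norm_mul, sub_mul, div_mul_cancel₀ _ hw0]
      _ ≤ (p : ℝ) ^ (-1 : ℤ) * (p : ℝ) ^ (n + 1) := by gcongr
      _ = (p : ℝ) ^ n := by
          rw [← zpow_add₀ natCast_prime_pos.ne']
          ring_nf
  · rintro ⟨j, -, hj⟩
    have hjw : ‖(j : ℚ_[p]) * w‖ ≤ (p : ℝ) ^ (n + 1) := by
      rw [norm_mul, hw]
      exact mul_le_of_le_one_left hpos.le (IsUltrametricDist.norm_natCast_le_one _ j)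
    calc ‖x‖ = ‖(x - j * w) + j * w‖ := by rw [sub_add_cancel]
      _ ≤ _ := IsUltrametricDist.norm_add_le_max _ _
      _ ≤ (p : ℝ) ^ (n + 1) :=
          max_le (hj.trans (zpow_le_zpow_right₀ one_lt_natCast_prime.le (by omega))) hjw

lemma pairwiseDisjoint_closedBall_digits (n : ℤ) :
    (Finset.range p : Set ℕ).PairwiseDisjoint
      fun j => closedBall ((j : ℚ_[p]) * (p : ℚ_[p]) ^ (-(n + 1))) ((p : ℝ) ^ n) := by
  intro j hj j' hj' hne
  simp only [Finset.coe_range, Set.mem_Iio] at hj hj'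
  refine Set.disjoint_left.mpr fun z hz hz' => ?_
  have h := (IsUltrametricDist.dist_triangle_max _ z _).trans
    (max_le (mem_closedBall'.mp hz) (mem_closedBall.mp hz'))
  have hunit : ‖((j - j' : ℤ) : ℚ_[p])‖ = 1 := by
    refine le_antisymm (Padic.norm_int_le_one _) (not_lt.mp fun hlt => hne ?_)
    have := Int.eq_zero_of_abs_lt_dvd (Padic.norm_intCast_lt_one_iff.mp hlt) (by rw [abs_lt]; omega)
    omega
  rw [dist_eq_norm, ← sub_mul, norm_mul, Padic.norm_p_zpow, neg_neg] at h
  push_cast at hunit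
  rw [hunit, one_mul] at h
  exact h.not_gt (zpow_lt_zpow_right₀ one_lt_natCast_prime (by omega))

section Measure

variable [MeasurableSpace ℚ_[p]] {μ : Measure ℚ_[p]} [μ.IsAddHaarMeasure]

lemma measureReal_cell_pos {c : ℚ_[p]} (hc : c ≠ 0) : 0 < μ.real (cell p K c) :=
  ENNReal.toReal_pos (measure_closedBall_pos μ c
    (mul_pos (zpow_pos natCast_prime_pos _) (norm_pos_iff.mpr hc))).ne'
    measure_closedBall_lt_top.ne

variable [BorelSpace ℚ_[p]]

lemma measureReal_closedBall_zero_zpow_succ (n : ℤ) :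
    μ.real (closedBall (0 : ℚ_[p]) ((p : ℝ) ^ (n + 1))) =
      p * μ.real (closedBall (0 : ℚ_[p]) ((p : ℝ) ^ n)) := by
  rw [closedBall_zero_zpow_succ_eq_biUnion, measureReal_biUnion_finset
    (pairwiseDisjoint_closedBall_digits n) (fun _ _ => measurableSet_closedBall)
    (fun _ _ => measure_closedBall_lt_top.ne)]
  simp [Measure.addHaar_real_closedBall_center]

lemma measureReal_closedBall_zero_zpow (n : ℤ) :
    μ.real (closedBall (0 : ℚ_[p]) ((p : ℝ) ^ n)) = (p : ℝ) ^ n * μ.real (closedBall 0 1) := by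
  have hp0 : (p : ℝ) ≠ 0 := natCast_prime_pos.ne'
  induction n using Int.induction_on with
  | zero => simp
  | succ n ih =>
    rw [measureReal_closedBall_zero_zpow_succ, ih, zpow_add_one₀ hp0]
    ring
  | pred n ih =>
    have h := measureReal_closedBall_zero_zpow_succ (μ := μ) (-(n : ℤ) - 1)
    rw [sub_add_cancel, ih] at h
    rw [eq_comm, ← mul_right_inj' hp0, ← h, zpow_sub_one₀ hp0]
    field_simp

lemma measureReal_cell {c : ℚ_[p]} (hc : c ≠ 0) :
    μ.real (cell p K c) = (p : ℝ) ^ (-(K : ℤ)) * ‖c‖ * μ.real (closedBall 0 1) := by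
  rw [cell, Measure.addHaar_real_closedBall_center, Padic.norm_eq_zpow_neg_valuation hc,
    ← zpow_add₀ natCast_prime_pos.ne', measureReal_closedBall_zero_zpow]

end Measure

section Conductor

variable {f g : ℚ_[p] → ℝ}

lemma HasConductor.eq_of_mem_cell (hf : HasConductor p m K f) {c z : ℚ_[p]}
    (hc : c ∈ Efund p m) (hz : z ∈ cell p K c) : f z = f c := by
  have hc0 := ne_zero_of_mem_Efund hc
  simpa [mul_div_cancel₀ z hc0] using hf c hc (z / c) ((mem_cell_iff hc0).mp hz)

lemma hasConductor_iff_forall_mem_cell :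
    HasConductor p m K f ↔ ∀ c ∈ Efund p m, ∀ z ∈ cell p K c, f z = f c := by
  refine ⟨fun hf c hc z hz => hf.eq_of_mem_cell hc hz, fun h x hx u hu => h x hx _ ?_⟩
  rwa [mem_cell_iff (ne_zero_of_mem_Efund hx), mul_div_cancel_left₀ _ (ne_zero_of_mem_Efund hx)]

lemma HasConductor.sub (hf : HasConductor p m K f) (hg : HasConductor p m K g) :
    HasConductor p m K (fun z => f z - g z) := fun x hx u hu => by
  simp only [hf x hx u hu, hg x hx u hu]

lemma HasConductor.comp_inversion (hK : 1 ≤ K) (hf : HasConductor p m K f) :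
    HasConductor p m K (fun z => f (inversion p m z)) := by
  refine hasConductor_iff_forall_mem_cell.mpr fun c hc z hz =>
    hf.eq_of_mem_cell (inversion_mem_Efund hc) ?_
  rwa [inversion_mem_cell_iff hK (inversion_ne_zero (ne_zero_of_mem_Efund hc)),
    inversion_involutive]

lemma HasConductor.continuousOn (hf : HasConductor p m K f) : ContinuousOn f (Efund p m) :=
  fun _ hc => (continuousAt_const.congr (Filter.mem_of_superset
    (cell_mem_nhds (ne_zero_of_mem_Efund hc))
    fun _ hz => (hf.eq_of_mem_cell hc hz).symm)).continuousWithinAt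

lemma HasConductor.dop_integrand (hf : HasConductor p m K f) (x : ℚ_[p]) :
    HasConductor p m K (fun z => (f z - f x) / ‖z - x‖ ^ 2) := by
  refine hasConductor_iff_forall_mem_cell.mpr fun c hc z hz => ?_
  have hfz : f z = f c := hf.eq_of_mem_cell hc hz
  by_cases hxc : x ∈ cell p K c
  · simp only [hfz, hf.eq_of_mem_cell hc hxc, sub_self, zero_div]
  have hlt : ‖z - c‖ < ‖c - x‖ := by
    rw [cell, mem_closedBall, dist_eq_norm, not_le, norm_sub_rev] at hxc
    exact (mem_closedBall.mp hz).trans_lt hxc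
  have hzx : ‖z - x‖ = ‖c - x‖ := by
    rw [← sub_add_sub_cancel z c x, Padic.add_eq_max_of_ne hlt.ne, max_eq_right hlt.le]
  simp only [hfz, hzx]

end Conductor

section Integration

variable [MeasurableSpace ℚ_[p]] [BorelSpace ℚ_[p]] {μ : Measure ℚ_[p]} {f g : ℚ_[p] → ℝ}

lemma HasConductor.integral_cell (hf : HasConductor p m K f) {c : ℚ_[p]} (hc : c ∈ Efund p m) :
    ∫ z in cell p K c, f z ∂μ = μ.real (cell p K c) * f c := by
  rw [setIntegral_congr_fun (s := cell p K c) measurableSet_closedBall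
    fun z hz => hf.eq_of_mem_cell hc hz, setIntegral_const, smul_eq_mul]

variable [μ.IsAddHaarMeasure]

lemma HasConductor.integrableOn_cell (hf : HasConductor p m K f) {c : ℚ_[p]}
    (hc : c ∈ Efund p m) : IntegrableOn f (cell p K c) μ :=
  (integrableOn_congr_fun (fun z hz => hf.eq_of_mem_cell hc hz) measurableSet_closedBall).mpr
    (integrableOn_const measure_closedBall_lt_top.ne)

lemma HasConductor.integrableOn_Efund (hK : 1 ≤ K) (hf : HasConductor p m K f) :
    IntegrableOn f (Efund p m) μ := by
  rw [Efund_eq_biUnion_cells hK, integrableOn_finset_iUnion]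
  intro B hB
  obtain ⟨c, hc, rfl⟩ := (finite_cells p m hK).mem_toFinset.mp hB
  exact hf.integrableOn_cell hc

lemma HasConductor.integral_Efund (hK : 1 ≤ K) (hf : HasConductor p m K f) :
    ∫ z in Efund p m, f z ∂μ = ∑ B ∈ (finite_cells p m hK).toFinset, ∫ z in B, f z ∂μ := by
  conv_lhs => rw [Efund_eq_biUnion_cells hK]
  refine integral_biUnion_finset _ (fun B hB => ?_) ?_ (fun B hB => ?_)
  · obtain ⟨c, -, rfl⟩ := (finite_cells p m hK).mem_toFinset.mp hB
    exact measurableSet_closedBall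
  · rw [Set.Finite.coe_toFinset]
    exact pairwiseDisjoint_cells hK
  · obtain ⟨c, hc, rfl⟩ := (finite_cells p m hK).mem_toFinset.mp hB
    exact hf.integrableOn_cell hc

lemma HasConductor.dop_eq_sum_cells (hK : 1 ≤ K) (hf : HasConductor p m K f) (x : ℚ_[p]) :
    Dop p m μ f x =
      ‖x‖ * ∑ B ∈ (finite_cells p m hK).toFinset, ∫ z in B, (f z - f x) / ‖z - x‖ ^ 2 ∂μ :=
  congrArg _ ((hf.dop_integrand x).integral_Efund hK)

lemma HasConductor.dop_sub (hK : 1 ≤ K) (hf : HasConductor p m K f) (hg : HasConductor p m K g)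
    (x : ℚ_[p]) :
    Dop p m μ (fun z => f z - g z) x = Dop p m μ f x - Dop p m μ g x := by
  have hsplit : ∀ z, (f z - g z - (f x - g x)) / ‖z - x‖ ^ 2 =
      (f z - f x) / ‖z - x‖ ^ 2 - (g z - g x) / ‖z - x‖ ^ 2 := fun z => by ring
  simp only [Dop, hsplit]
  rw [integral_sub ((hf.dop_integrand x).integrableOn_Efund hK)
    ((hg.dop_integrand x).integrableOn_Efund hK), mul_sub]

lemma HasConductor.dop_comp_inversion (hK : 1 ≤ K) (hf : HasConductor p m K f) {x : ℚ_[p]}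
    (hx : x ∈ Efund p m) :
    Dop p m μ (fun z => f (inversion p m z)) x = Dop p m μ f (inversion p m x) := by
  have hm := one_le_of_mem_Efund hx
  rw [(hf.comp_inversion hK).dop_eq_sum_cells hK x,
    hf.dop_eq_sum_cells hK (inversion p m x), Finset.mul_sum, Finset.mul_sum]
  have hmaps : ∀ B ∈ (finite_cells p m hK).toFinset,
      inversion p m '' B ∈ (finite_cells p m hK).toFinset := by
    simp only [Set.Finite.mem_toFinset]
    rintro _ ⟨c, hc, rfl⟩
    exact ⟨_, inversion_mem_Efund hc, (image_inversion_cell hK (ne_zero_of_mem_Efund hc)).symm⟩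
  have hinv : ∀ B : Set ℚ_[p], inversion p m '' (inversion p m '' B) = B := fun B => by
    rw [Set.image_image]
    simp [inversion_involutive _]
  refine Finset.sum_nbij' _ _ hmaps hmaps (fun B _ => hinv B) (fun B _ => hinv B) fun B hB => ?_
  obtain ⟨c, hc, rfl⟩ := (finite_cells p m hK).mem_toFinset.mp hB
  have hc0 := ne_zero_of_mem_Efund hc
  rw [image_inversion_cell hK hc0, ((hf.comp_inversion hK).dop_integrand x).integral_cell hc,
    (hf.dop_integrand (inversion p m x)).integral_cell (inversion_mem_Efund hc),
    measureReal_cell hc0, measureReal_cell (inversion_ne_zero hc0)]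
  linear_combination (-((p : ℝ) ^ (-(K : ℤ)) * μ.real (closedBall 0 1) *
    (f (inversion p m c) - f (inversion p m x)))) *
      inversion_kernel_eq hm hc0 (ne_zero_of_mem_Efund hx)

/-- Maximum principle: `f` attains its maximum on the compact set `E` at some `c₀`, and
`D f (c₀) = 0` is a sum of nonpositive terms, one for each cell, so `f ≡ f c₀` on `E`. -/
lemma HasConductor.eq_of_dop_eq_zero (hK : 1 ≤ K) (hf : HasConductor p m K f)
    (hD : ∀ x ∈ Efund p m, Dop p m μ f x = 0) {a b : ℚ_[p]} (ha : a ∈ Efund p m)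
    (hb : b ∈ Efund p m) : f a = f b := by
  obtain ⟨c₀, hc₀, hmax⟩ := isCompact_Efund.exists_isMaxOn ⟨a, ha⟩ hf.continuousOn
  have hg := hf.dop_integrand c₀
  have hterm : ∀ B ∈ (finite_cells p m hK).toFinset,
      ∫ z in B, (f z - f c₀) / ‖z - c₀‖ ^ 2 ∂μ ≤ 0 := by
    intro B hB
    obtain ⟨c, hc, rfl⟩ := (finite_cells p m hK).mem_toFinset.mp hB
    rw [hg.integral_cell hc]
    exact mul_nonpos_of_nonneg_of_nonpos measureReal_nonneg
      (div_nonpos_of_nonpos_of_nonneg (sub_nonpos.mpr (hmax hc)) (sq_nonneg _))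
  have hsum := hD c₀ hc₀
  rw [hf.dop_eq_sum_cells hK c₀, mul_eq_zero, norm_eq_zero] at hsum
  have hzero := (Finset.sum_eq_zero_iff_of_nonpos hterm).mp
    (hsum.resolve_left (ne_zero_of_mem_Efund hc₀))
  suffices h : ∀ z ∈ Efund p m, f z = f c₀ from (h a ha).trans (h b hb).symm
  intro z hz
  have hz' := hzero (cell p K z) ((finite_cells p m hK).mem_toFinset.mpr ⟨z, hz, rfl⟩)
  rw [hg.integral_cell hz, mul_eq_zero, div_eq_zero_iff, sub_eq_zero, pow_eq_zero_iff two_ne_zero,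
    norm_eq_zero, sub_eq_zero] at hz'
  rcases hz' with h | h | rfl
  · exact absurd h (measureReal_cell_pos (ne_zero_of_mem_Efund hz)).ne'
  · exact h
  · rfl

lemma IsGreen.inversion_sub_eq (hK : 1 ≤ K) {G : ℚ_[p] → ℚ_[p] → ℝ} (hG : IsGreen p m μ K G)
    {y a b : ℚ_[p]} (hy : y ∈ Efund p m) (ha : a ∈ Efund p m) (hb : b ∈ Efund p m) :
    G (inversion p m a) (inversion p m y) - G a y =
      G (inversion p m b) (inversion p m y) - G b y := by
  obtain ⟨hcond, -, hD⟩ := hG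
  have hσy := inversion_mem_Efund hy
  have hσ := (hcond _ hσy).comp_inversion hK
  refine (hσ.sub (hcond y hy)).eq_of_dop_eq_zero (μ := μ) hK (fun x hx => ?_) ha hb
  rw [hσ.dop_sub hK (hcond y hy) x, (hcond _ hσy).dop_comp_inversion hK hx,
    hD _ (inversion_mem_Efund hx) _ hσy, hD x hx y hy, inversion_div_inversion]
  simp only [Padic.norm_inv_sub_one_le_iff (zpow_neg_lt_one hK), sub_self]

end Integration

theorem green_inversion_symmetry_general (p m : ℕ) [Fact p.Prime]
    [MeasurableSpace ℚ_[p]] [BorelSpace ℚ_[p]]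
    (μ : Measure ℚ_[p]) [μ.IsAddHaarMeasure]
    (k : ℕ) (hk : 1 ≤ k) (G : ℚ_[p] → ℚ_[p] → ℝ)
    (hG : IsGreen p m μ k G) (hGs : IsSymmG p m G) :
    ∀ x ∈ Efund p m, ∀ y ∈ Efund p m,
      (p : ℚ_[p]) ^ (m - 1) * x⁻¹ ∈ Efund p m ∧
      (p : ℚ_[p]) ^ (m - 1) * y⁻¹ ∈ Efund p m ∧
      G ((p : ℚ_[p]) ^ (m - 1) * x⁻¹) ((p : ℚ_[p]) ^ (m - 1) * y⁻¹) = G x y := by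
  intro x hx y hy
  refine ⟨inversion_mem_Efund hx, inversion_mem_Efund hy, ?_⟩
  set Δ := fun a b => G (inversion p m a) (inversion p m b) - G a b with hΔ
  have hsymm : ∀ a ∈ Efund p m, ∀ b ∈ Efund p m, Δ a b = Δ b a := fun a ha b hb => by
    simp only [hΔ, hGs a ha b hb, hGs _ (inversion_mem_Efund ha) _ (inversion_mem_Efund hb)]
  have hx' := inversion_mem_Efund hx
  have hy' := inversion_mem_Efund hy
  have h : Δ (inversion p m x) (inversion p m y) = Δ x y :=
    calc Δ (inversion p m x) (inversion p m y) = Δ x (inversion p m y) :=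
          hG.inversion_sub_eq hk hy' hx' hx
      _ = Δ (inversion p m y) x := hsymm _ hx _ hy'
      _ = Δ y x := hG.inversion_sub_eq hk hx hy' hy
      _ = Δ x y := hsymm _ hy _ hx
  simp only [hΔ, inversion_involutive x, inversion_involutive y] at h
  change G (inversion p m x) (inversion p m y) = G x y
  linarith

/-- Symmetric Green's functions on finite quotients have the inversion
symmetry: if `k ≥ 1` and `G` is a symmetric Green's function on `E_k`, then for all
`x, y ∈ E` one has `p^{m−1} x⁻¹ ∈ E`, `p^{m−1} y⁻¹ ∈ E`, and
`G(p^{m−1} x⁻¹, p^{m−1} y⁻¹) = G(x, y)`. -/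
theorem green_inversion_symmetry (p m : ℕ) [Fact p.Prime] (hm : 1 ≤ m)
    [MeasurableSpace ℚ_[p]] [BorelSpace ℚ_[p]]
    (μ : Measure ℚ_[p]) [μ.IsAddHaarMeasure]
    (hμ : μ (Metric.closedBall 0 1) = 1)
    (k : ℕ) (hk : 1 ≤ k) (G : ℚ_[p] → ℚ_[p] → ℝ)
    (hG : IsGreen p m μ k G) (hGs : IsSymmG p m G) :
    ∀ x ∈ Efund p m, ∀ y ∈ Efund p m,
      (p : ℚ_[p]) ^ (m - 1) * x⁻¹ ∈ Efund p m ∧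
      (p : ℚ_[p]) ^ (m - 1) * y⁻¹ ∈ Efund p m ∧
      G ((p : ℚ_[p]) ^ (m - 1) * x⁻¹) ((p : ℚ_[p]) ^ (m - 1) * y⁻¹) = G x y :=
  green_inversion_symmetry_general p m μ k hk G hG hGs
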